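/- The integral ∫_0^{π/2} t^2 / sin t dt equals 2πG − (7/2)ζ(3), where G is the Catalan constant. -/

import Mathlib

/-!
Abel summation of the divergent expansion `1 / sin t = 2 ∑ sin ((2k+1) t)`: for `|x| < 1`,
`2 ∑ x^(2k+1) sin ((2k+1) t)` is the imaginary part of `2z / (1 - z²)` with `z = x e^{it}`, a kernel
that tends to `1 / sin t` as `x → 1⁻` and, for `x ∈ [1/2, 1)`, stays below `4 / sin t`, so that
`t² ·` kernel is dominated on `(0, π/2]`. Integrating termwise against `t²` gives
`∑ 2 x^(2k+1) (π (-1)^k / (2k+1)² - 2 / (2k+1)³)`; letting `x → 1⁻` on both sides yields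
`2πG - 4 ∑ 1/(2k+1)³ = 2πG - (7/2) ζ(3)`.
-/

open Real

noncomputable def catalanG : ℝ := ∑' k : ℕ, (-1 : ℝ) ^ k / (2 * (k : ℝ) + 1) ^ 2

noncomputable def zeta3 : ℝ := ∑' k : ℕ, 1 / ((k : ℝ) + 1) ^ 3

open Filter Topology MeasureTheory

theorem integral_sq_mul_sin_mul {a : ℝ} (ha : a ≠ 0) (b : ℝ) :
    ∫ t in (0:ℝ)..b, t ^ 2 * sin (a * t) =
      -(b ^ 2 * cos (a * b)) / a + 2 * b * sin (a * b) / a ^ 2 + 2 * (cos (a * b) - 1) / a ^ 3 := by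
  have hat (t : ℝ) : HasDerivAt (fun t => a * t) a t := by
    simpa using (hasDerivAt_id t).const_mul a
  have hderiv (t : ℝ) : HasDerivAt
      (fun t => -(t ^ 2 * cos (a * t)) / a + 2 * t * sin (a * t) / a ^ 2 + 2 * cos (a * t) / a ^ 3)
      (t ^ 2 * sin (a * t)) t := by
    refine ((((hasDerivAt_pow 2 t).mul (hat t).cos).neg.div_const a).add
      ((((hasDerivAt_id t).const_mul 2).mul (hat t).sin).div_const (a ^ 2))).add
      ((hat t).cos.const_mul 2 |>.div_const (a ^ 3)) |>.congr_deriv ?_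
    simp only [id]
    field_simp
    ring
  rw [intervalIntegral.integral_eq_sub_of_hasDerivAt (fun t _ => hderiv t)
    (Continuous.intervalIntegrable (by fun_prop) _ _)]
  simp only [mul_zero, cos_zero, sin_zero]
  ring

theorem integral_sq_mul_sin_odd_mul (k : ℕ) :
    ∫ t in (0:ℝ)..(π / 2), t ^ 2 * sin ((2 * k + 1) * t) =
      π * (-1) ^ k / (2 * k + 1) ^ 2 - 2 / (2 * k + 1) ^ 3 := by
  have hangle : (2 * k + 1) * (π / 2) = k * π + π / 2 := by ring
  have hcos : cos (k * π) = (-1) ^ k := by simpa using cos_nat_mul_pi_sub 0 k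
  rw [integral_sq_mul_sin_mul (by positivity), hangle, cos_add_pi_div_two, sin_add_pi_div_two,
    sin_nat_mul_pi, hcos]
  field_simp
  ring

theorem hasSum_pow_two_mul_add_one {K : Type*} [NormedDivisionRing K] [CompleteSpace K] {z : K}
    (hz : ‖z‖ < 1) : HasSum (fun k : ℕ => z ^ (2 * k + 1)) (z / (1 - z ^ 2)) := by
  have hz2 : ‖z ^ 2‖ < 1 := by
    rw [norm_pow]
    nlinarith [norm_nonneg z]
  rw [div_eq_mul_inv]
  exact (hasSum_geometric_of_norm_lt_one hz2).mul_left z |>.congr_fun fun k => by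
    rw [← pow_mul, ← pow_succ']

theorem Complex.im_div_one_sub_sq (z : ℂ) :
    (z / (1 - z ^ 2)).im = (1 + normSq z) * z.im / normSq (1 - z ^ 2) := by
  simp only [div_im, normSq_apply, sub_re, sub_im, one_re, one_im, pow_two, mul_re, mul_im]
  ring

theorem Complex.normSq_one_sub_sq_ofReal_mul_exp (x t : ℝ) :
    normSq (1 - (x * exp (t * I)) ^ 2) = (1 - x ^ 2) ^ 2 + 4 * x ^ 2 * Real.sin t ^ 2 := by
  simp only [normSq_apply, sub_re, sub_im, one_re, one_im, pow_two, mul_re, mul_im, ofReal_re,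
    ofReal_im, exp_ofReal_mul_I_re, exp_ofReal_mul_I_im]
  linear_combination (2 * x ^ 4 - 2 * x ^ 2 + x ^ 4 * (Real.sin t ^ 2 + Real.cos t ^ 2 - 1)) *
    Real.sin_sq_add_cos_sq t

noncomputable def oddSineKernel (x t : ℝ) : ℝ :=
  2 * x * (1 + x ^ 2) * sin t / ((1 - x ^ 2) ^ 2 + 4 * x ^ 2 * sin t ^ 2)

theorem hasSum_oddSineKernel {x : ℝ} (hx : |x| < 1) (t : ℝ) :
    HasSum (fun k : ℕ => 2 * x ^ (2 * k + 1) * sin ((2 * k + 1) * t)) (oddSineKernel x t) := by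
  set z : ℂ := x * Complex.exp (t * Complex.I)
  have hz : ‖z‖ < 1 := by simpa [z, Complex.norm_exp_ofReal_mul_I] using hx
  have him (n : ℕ) : (z ^ n).im = x ^ n * sin (n * t) := by
    rw [mul_pow, ← Complex.exp_nat_mul, ← Complex.ofReal_pow, ← mul_assoc, ← Complex.ofReal_natCast,
      ← Complex.ofReal_mul, Complex.im_ofReal_mul, Complex.exp_ofReal_mul_I_im]
  have hval : 2 * (z / (1 - z ^ 2)).im = oddSineKernel x t := by
    rw [Complex.im_div_one_sub_sq, Complex.normSq_one_sub_sq_ofReal_mul_exp, ← pow_one z, him 1,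
      Complex.normSq_eq_norm_sq, pow_one]
    simp only [z, norm_mul, Complex.norm_real, Complex.norm_exp_ofReal_mul_I, Nat.cast_one, one_mul,
      mul_one, Real.norm_eq_abs, sq_abs, oddSineKernel]
    ring
  rw [← hval]
  exact ((hasSum_pow_two_mul_add_one hz).mapL Complex.imCLM).mul_left 2 |>.congr_fun fun k => by
    rw [Complex.imCLM_apply, him]
    push_cast
    ring

theorem hasSum_integral_mul_oddSineKernel {f : ℝ → ℝ} {a b x : ℝ}
    (hf : IntervalIntegrable f volume a b) (hx : |x| < 1) :
    HasSum (fun k : ℕ => 2 * x ^ (2 * k + 1) * ∫ t in a..b, f t * sin ((2 * k + 1) * t))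
      (∫ t in a..b, f t * oddSineKernel x t) := by
  have hgeom : Summable fun k : ℕ => 2 * |x| ^ (2 * k + 1) := by
    have h : |x| ^ 2 < 1 := by nlinarith [abs_nonneg x]
    simpa [pow_succ, pow_mul, mul_assoc] using
      ((summable_geometric_of_lt_one (by positivity) h).mul_right |x|).mul_left 2
  simp_rw [← intervalIntegral.integral_const_mul]
  refine intervalIntegral.hasSum_integral_of_dominated_convergence
    (fun k t => 2 * |x| ^ (2 * k + 1) * |f t|) (fun k => ?_) (fun k => ?_) ?_ ?_ ?_
  · exact (hf.def'.aestronglyMeasurable.mul (by fun_prop : Continuous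
      fun t : ℝ => sin ((2 * k + 1) * t)).aestronglyMeasurable).const_mul _
  · refine ae_of_all _ fun t _ => ?_
    rw [norm_mul, norm_mul, Real.norm_eq_abs, Real.norm_eq_abs, Real.norm_eq_abs, abs_mul, abs_pow,
      abs_two]
    exact mul_le_mul_of_nonneg_left (mul_le_of_le_one_right (abs_nonneg _) (abs_sin_le_one _))
      (by positivity)
  · exact ae_of_all _ fun t _ => hgeom.mul_right _
  · simp_rw [tsum_mul_right]
    exact hf.abs.const_mul _
  · exact ae_of_all _ fun t _ =>
      (hasSum_oddSineKernel hx t).mul_left (f t) |>.congr_fun fun k => by ring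

theorem tendsto_oddSineKernel_one {t : ℝ} (ht : sin t ≠ 0) :
    Tendsto (fun x => oddSineKernel x t) (𝓝 1) (𝓝 (sin t)⁻¹) := by
  have hcont : ContinuousAt (fun x => oddSineKernel x t) 1 :=
    ContinuousAt.div (by fun_prop) (by fun_prop) (by positivity)
  convert hcont.tendsto using 2
  simp only [oddSineKernel]
  field_simp
  ring

theorem oddSineKernel_nonneg {x t : ℝ} (hx : 0 ≤ x) (ht : 0 ≤ sin t) : 0 ≤ oddSineKernel x t := by
  unfold oddSineKernel
  positivity

theorem oddSineKernel_le {x t : ℝ} (hx₀ : 1 / 2 ≤ x) (hx₁ : x ≤ 1) (ht : 0 < sin t) :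
    oddSineKernel x t ≤ 4 / sin t := by
  have hcoef : 2 * x * (1 + x ^ 2) ≤ 4 := by nlinarith
  have hx2 : 1 ≤ 4 * x ^ 2 := by nlinarith
  have hden : sin t ^ 2 ≤ (1 - x ^ 2) ^ 2 + 4 * x ^ 2 * sin t ^ 2 := by
    nlinarith [mul_le_mul_of_nonneg_right hx2 (sq_nonneg (sin t)), sq_nonneg (1 - x ^ 2)]
  rw [oddSineKernel, div_le_div_iff₀ (by positivity) ht]
  nlinarith

theorem sq_div_sin_le {t : ℝ} (ht₀ : 0 < t) (ht : t ≤ π / 2) : t ^ 2 / sin t ≤ π ^ 2 / 4 := by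
  have hsin : 2 / π * t ≤ sin t := mul_le_sin ht₀.le ht
  rw [div_le_iff₀ (lt_of_lt_of_le (by positivity) hsin)]
  calc t ^ 2 ≤ π / 2 * t := by nlinarith
    _ = π ^ 2 / 4 * (2 / π * t) := by field_simp; ring
    _ ≤ π ^ 2 / 4 * sin t := by gcongr

theorem tendsto_integral_sq_mul_oddSineKernel :
    Tendsto (fun x => ∫ t in (0:ℝ)..(π / 2), t ^ 2 * oddSineKernel x t) (𝓝[<] 1)
      (𝓝 (∫ t in (0:ℝ)..(π / 2), t ^ 2 / sin t)) := by
  have hpi := pi_pos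
  refine intervalIntegral.tendsto_integral_filter_of_dominated_convergence (fun _ => π ^ 2)
    (Eventually.of_forall fun x => ?_) ?_ intervalIntegrable_const ?_
  · unfold oddSineKernel
    exact (by fun_prop : Measurable _).aestronglyMeasurable
  · filter_upwards [Ioo_mem_nhdsLT (show (1 / 2 : ℝ) < 1 by norm_num)] with x hx
    refine ae_of_all _ fun t ht => ?_
    rw [Set.uIoc_of_le (by positivity)] at ht
    have hsin : 0 < sin t := sin_pos_of_pos_of_lt_pi ht.1 (by linarith [ht.2])
    rw [Real.norm_eq_abs, abs_of_nonneg (mul_nonneg (sq_nonneg t)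
      (oddSineKernel_nonneg (by linarith [hx.1]) hsin.le))]
    calc t ^ 2 * oddSineKernel x t ≤ t ^ 2 * (4 / sin t) :=
          mul_le_mul_of_nonneg_left (oddSineKernel_le hx.1.le hx.2.le hsin) (sq_nonneg t)
      _ = 4 * (t ^ 2 / sin t) := by ring
      _ ≤ 4 * (π ^ 2 / 4) := mul_le_mul_of_nonneg_left (sq_div_sin_le ht.1 ht.2) (by norm_num)
      _ = π ^ 2 := by ring
  · refine ae_of_all _ fun t ht => ?_
    rw [Set.uIoc_of_le (by positivity)] at ht
    have hsin : sin t ≠ 0 := (sin_pos_of_pos_of_lt_pi ht.1 (by linarith [ht.2])).ne'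
    exact ((tendsto_oddSineKernel_one hsin).mono_left nhdsWithin_le_nhds).const_mul (t ^ 2)

theorem tendsto_tsum_mul_pow_nhdsLT_one {c : ℕ → ℝ} (hc : Summable c) (e : ℕ → ℕ) :
    Tendsto (fun x : ℝ => ∑' k, c k * x ^ e k) (𝓝[<] 1) (𝓝 (∑' k, c k)) := by
  refine tendsto_tsum_of_dominated_convergence hc.abs (fun k => ?_) ?_
  · have hcont : Continuous fun x : ℝ => c k * x ^ e k := by fun_prop
    simpa using (hcont.tendsto 1).mono_left nhdsWithin_le_nhds
  · filter_upwards [Ioo_mem_nhdsLT (show (0 : ℝ) < 1 by norm_num)] with x hx k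
    rw [Real.norm_eq_abs, abs_mul, abs_pow, abs_of_pos hx.1]
    exact mul_le_of_le_one_right (abs_nonneg _) (pow_le_one₀ hx.1.le hx.2.le)

theorem summable_one_div_nat_add_one_pow {p : ℕ} (hp : 1 < p) :
    Summable fun k : ℕ => 1 / ((k : ℝ) + 1) ^ p := by
  simpa using (summable_nat_add_iff 1).2 (summable_one_div_nat_pow.2 hp)

theorem summable_one_div_two_mul_add_one_pow {p : ℕ} (hp : 1 < p) :
    Summable fun k : ℕ => 1 / (2 * (k : ℝ) + 1) ^ p := by
  refine (summable_one_div_nat_add_one_pow hp).of_nonneg_of_le (fun k => by positivity) fun k => ?_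
  gcongr
  linarith [k.cast_nonneg (α := ℝ)]

theorem tsum_one_div_two_mul_add_one_pow {p : ℕ} (hp : 1 < p) :
    ∑' k : ℕ, 1 / (2 * (k : ℝ) + 1) ^ p = (1 - 1 / 2 ^ p) * ∑' k : ℕ, 1 / ((k : ℝ) + 1) ^ p := by
  set f : ℕ → ℝ := fun n => 1 / ((n : ℝ) + 1) ^ p
  have hodd (k : ℕ) : f (2 * k + 1) = 1 / 2 ^ p * f k := by
    simp only [f]
    push_cast
    rw [show 2 * (k : ℝ) + 1 + 1 = 2 * (k + 1) by ring, mul_pow]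
    field_simp
  have heven (k : ℕ) : f (2 * k) = 1 / (2 * (k : ℝ) + 1) ^ p := by
    simp only [f]
    push_cast
    rfl
  have hf : Summable f := summable_one_div_nat_add_one_pow hp
  have hf_even : Summable fun k => f (2 * k) := by
    simpa only [heven] using summable_one_div_two_mul_add_one_pow hp
  have hf_odd : Summable fun k => f (2 * k + 1) := by
    simpa only [hodd] using hf.mul_left (1 / 2 ^ p)
  have hsplit := tsum_even_add_odd hf_even hf_odd
  simp only [heven, hodd, tsum_mul_left] at hsplit
  linarith

theorem hasSum_catalanG : HasSum (fun k : ℕ => (-1 : ℝ) ^ k / (2 * (k : ℝ) + 1) ^ 2) catalanG := by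
  refine (Summable.of_abs ?_).hasSum
  simpa [abs_div] using summable_one_div_two_mul_add_one_pow one_lt_two

theorem hasSum_two_mul_integral_sq_mul_sin_odd_mul :
    HasSum (fun k : ℕ => 2 * ∫ t in (0:ℝ)..(π / 2), t ^ 2 * sin ((2 * k + 1) * t))
      (2 * π * catalanG - 7 / 2 * zeta3) := by
  simp only [integral_sq_mul_sin_odd_mul]
  have hodd : HasSum (fun k : ℕ => 1 / (2 * (k : ℝ) + 1) ^ 3) (7 / 8 * zeta3) := by
    convert (summable_one_div_two_mul_add_one_pow (p := 3) (by norm_num)).hasSum using 1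
    rw [tsum_one_div_two_mul_add_one_pow (by norm_num), zeta3]
    norm_num
  have h := (hasSum_catalanG.mul_left (2 * π)).sub (hodd.mul_left 4)
  rw [show 2 * π * catalanG - 4 * (7 / 8 * zeta3) = 2 * π * catalanG - 7 / 2 * zeta3 by ring] at h
  exact h.congr_fun fun k => by ring

theorem stmt7 :
    ∫ t in (0:ℝ)..(π/2), t ^ 2 / Real.sin t
    = 2 * π * catalanG - 7/2 * zeta3 := by
  set c : ℕ → ℝ := fun k => 2 * ∫ t in (0:ℝ)..(π / 2), t ^ 2 * sin ((2 * k + 1) * t)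
  have hc : HasSum c (2 * π * catalanG - 7 / 2 * zeta3) :=
    hasSum_two_mul_integral_sq_mul_sin_odd_mul
  have habel : (fun x : ℝ => ∑' k, c k * x ^ (2 * k + 1)) =ᶠ[𝓝[<] 1]
      fun x => ∫ t in (0:ℝ)..(π / 2), t ^ 2 * oddSineKernel x t := by
    filter_upwards [Ioo_mem_nhdsLT (show (-1 : ℝ) < 1 by norm_num)] with x hx
    exact (hasSum_integral_mul_oddSineKernel ((continuous_pow 2).intervalIntegrable _ _)
      (abs_lt.2 hx)).congr_fun (fun k => by ring) |>.tsum_eq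
  refine tendsto_nhds_unique tendsto_integral_sq_mul_oddSineKernel ?_
  rw [← hc.tsum_eq]
  exact (tendsto_tsum_mul_pow_nhdsLT_one hc.summable _).congr' habel
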